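/- If a finite simplicial complex Y collapses onto a subcomplex X, then the underlying polyhedron |X| (the union of the convex hulls of the faces of X) is a strong deformation retract of |Y|; that is, there is a continuous map H : |Y| × [0,1] → |Y| with H(y,0) = y for all y ∈ |Y|, H(y,1) ∈ |X| for all y ∈ |Y|, and H(x,t) = x for all x ∈ |X| and t ∈ [0,1]. In particular, the underlying space of every collapsible finite simplicial complex is contractible. -/

import Mathlib

/-!
An elementary collapse of a free face `t ⊂ s = insert a t` is undone by a straight-line homotopy
inside the simplex `|s|`. With `λ` the barycentric coordinates of `s` and
`m x = min_{v ∈ t} λ_v x`, the point `x` moves by `u • m x • ∑_{v ∈ t} (a - v)`: this lowers each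
`λ_v` with `v ∈ t` by `u * m x` and raises `λ_a`, so it stays in `|s|`, and at `u = 1` the
minimising coordinate vanishes, putting the point in the face `s.erase v` of the collapsed complex
`L`. A point of `|s| ∩ |L|` lies in a face of `s` missing some vertex of `t`, so `m` vanishes
there; hence `m`, extended by `0` off `|s|`, is continuous on `|K| ⊆ |s| ∪ |L|`, and the homotopy
fixes `|L|`. Strong deformation retractions compose along a sequence of collapses, and a
deformation retraction onto a point contracts the space.
-/

open Geometry unitInterval

variable {E : Type*} [NormedAddCommGroup E] [NormedSpace ℝ E]

/-- `t` is a free face of the simplicial complex `K`, with `s` the unique face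
properly containing it; moreover `card s = card t + 1`. -/
def IsFreeFace (K : SimplicialComplex ℝ E) (t s : Finset E) : Prop :=
  t ∈ K.faces ∧ s ∈ K.faces ∧ t ⊂ s ∧ s.card = t.card + 1 ∧
    ∀ u ∈ K.faces, t ⊂ u → u = s

/-- `L` is obtained from `K` by an elementary collapse: removing a free face `t`
together with the unique face `s` properly containing it. -/
def ElemCollapse (K L : SimplicialComplex ℝ E) : Prop :=
  ∃ t s : Finset E, IsFreeFace K t s ∧ L.faces = K.faces \ {t, s}

/-- `K` collapses onto `L` via a finite sequence of elementary collapses. -/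
def CollapsesTo (K L : SimplicialComplex ℝ E) : Prop :=
  Relation.ReflTransGen ElemCollapse K L

/-- `K` is collapsible: it collapses onto a subcomplex consisting of a single vertex. -/
def Collapsible (K : SimplicialComplex ℝ E) : Prop :=
  ∃ (L : SimplicialComplex ℝ E) (v : E), L.faces = {{v}} ∧ CollapsesTo K L

open scoped Finset

theorem LinearIndependent.exists_strongDual_apply_eq_ite {𝕜 F ι : Type*} [RCLike 𝕜]
    [NormedAddCommGroup F] [NormedSpace 𝕜 F] [Finite ι] [DecidableEq ι] {f : ι → F}
    (hf : LinearIndependent 𝕜 f) :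
    ∃ g : ι → StrongDual 𝕜 F, ∀ i j, g i (f j) = if i = j then 1 else 0 := by
  have : FiniteDimensional 𝕜 (Submodule.span 𝕜 (Set.range f)) :=
    FiniteDimensional.span_of_finite 𝕜 (Set.finite_range f)
  let b := Module.Basis.span hf
  choose g hg using fun i ↦
    StrongDual.exists_extension _ (LinearMap.toContinuousLinearMap (b.coord i))
  refine ⟨g, fun i j ↦ ?_⟩
  have hbj : (b j : F) = f j := by simp [b, Module.Basis.span_apply]
  rw [← hbj, hg]
  simp [Finsupp.single_apply, eq_comm]

theorem AffineIndependent.linearIndependent_prodMk_one {k V ι : Type*} [Ring k]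
    [AddCommGroup V] [Module k V] {p : ι → V} (hp : AffineIndependent k p) :
    LinearIndependent k fun i ↦ (p i, (1 : k)) := by
  rw [linearIndependent_iff']
  intro S g hg
  have hsum := congrArg Prod.snd hg
  have hcomb := congrArg Prod.fst hg
  simp only [Prod.fst_sum, Prod.snd_sum, Prod.smul_mk, smul_eq_mul, mul_one, Prod.fst_zero,
    Prod.snd_zero] at hsum hcomb
  exact hp.eq_zero_of_sum_eq_zero hsum hcomb

structure IsBarycentricCoords (s : Finset E) (c : E → E → ℝ) : Prop where
  continuous (v : E) : Continuous (c v)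
  apply_sum (w : E → ℝ) (hw : ∑ u ∈ s, w u = 1) (v : E) (hv : v ∈ s) :
    c v (∑ u ∈ s, w u • u) = w v

theorem AffineIndependent.exists_isBarycentricCoords {s : Finset E}
    (hs : AffineIndependent ℝ ((↑) : s → E)) : ∃ c, IsBarycentricCoords s c := by
  classical
  -- The lift `x ↦ (x, 1)` turns affine combinations into linear ones, so coordinates are
  -- functionals dual to the lifted vertices.
  obtain ⟨g, hg⟩ := hs.linearIndependent_prodMk_one.exists_strongDual_apply_eq_ite
  refine ⟨fun v x ↦ if hv : v ∈ s then g ⟨v, hv⟩ (x, 1) else 0, fun v ↦ ?_, fun w hw v hv ↦ ?_⟩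
  · by_cases hv : v ∈ s
    · simp only [dif_pos hv]
      fun_prop
    · simp only [dif_neg hv]
      exact continuous_const
  · have hlift : ((∑ u ∈ s, w u • u, 1) : E × ℝ) = ∑ u : s, w u • ((u : E), (1 : ℝ)) := by
      rw [Finset.sum_coe_sort s fun u ↦ w u • (u, (1 : ℝ))]
      ext <;> simp [Prod.fst_sum, Prod.snd_sum, hw]
    simp only [dif_pos hv, hlift, map_sum, map_smul, hg, smul_eq_mul, mul_ite, mul_one, mul_zero,
      Finset.sum_ite_eq, Finset.mem_univ, if_true]

namespace IsBarycentricCoords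

variable {s : Finset E} {c : E → E → ℝ}

section

variable (hc : IsBarycentricCoords s c)
include hc

theorem mem_convexHull_iff {x : E} :
    x ∈ convexHull ℝ (s : Set E) ↔
      (∀ v ∈ s, 0 ≤ c v x) ∧ ∑ v ∈ s, c v x = 1 ∧ ∑ v ∈ s, c v x • v = x := by
  refine ⟨fun hx ↦ ?_, fun h ↦ Finset.mem_convexHull'.2 ⟨_, h⟩⟩
  obtain ⟨w, hw₀, hw₁, rfl⟩ := Finset.mem_convexHull'.1 hx
  have hcw : ∀ v ∈ s, c v (∑ u ∈ s, w u • u) = w v := hc.apply_sum w hw₁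
  refine ⟨fun v hv ↦ hcw v hv ▸ hw₀ v hv, ?_, ?_⟩
  · rwa [Finset.sum_congr rfl hcw]
  · exact Finset.sum_congr rfl fun v hv ↦ by rw [hcw v hv]

theorem apply_eq_zero_of_mem_convexHull {u : Finset E} (hus : u ⊆ s) {x : E}
    (hx : x ∈ convexHull ℝ (u : Set E)) {v : E} (hv : v ∈ s) (hvu : v ∉ u) : c v x = 0 := by
  classical
  obtain ⟨w, -, hw₁, rfl⟩ := Finset.mem_convexHull'.1 hx
  have hsu : s ∩ u = u := Finset.inter_eq_right.2 hus
  have h := hc.apply_sum (fun y ↦ if y ∈ u then w y else 0) ?_ v hv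
  · simpa [ite_smul, Finset.sum_ite_mem, hsu, hvu] using h
  · simpa [Finset.sum_ite_mem, hsu] using hw₁

theorem mem_convexHull_erase [DecidableEq E] {x : E} (hx : x ∈ convexHull ℝ (s : Set E)) {v : E}
    (hv : c v x = 0) : x ∈ convexHull ℝ ((s.erase v : Finset E) : Set E) := by
  obtain ⟨h₀, h₁, hx⟩ := hc.mem_convexHull_iff.1 hx
  refine Finset.mem_convexHull'.2
    ⟨fun u ↦ c u x, fun u hu ↦ h₀ u (Finset.mem_of_mem_erase hu), ?_, ?_⟩
  · exact (Finset.sum_erase (f := fun u ↦ c u x) s hv).trans h₁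
  · exact (Finset.sum_erase (f := fun u ↦ c u x • u) s (by simp [hv])).trans hx

end

theorem add_smul_mem_convexHull_and_apply_eq [DecidableEq E] {a : E} {t : Finset E}
    (hc : IsBarycentricCoords (insert a t) c) (ha : a ∉ t) {x : E}
    (hx : x ∈ convexHull ℝ ((insert a t : Finset E) : Set E)) {μ : ℝ} (hμ₀ : 0 ≤ μ)
    (hμ : ∀ v ∈ t, μ ≤ c v x) :
    x + μ • ((#t : ℝ) • a - ∑ v ∈ t, v) ∈ convexHull ℝ ((insert a t : Finset E) : Set E) ∧
      ∀ v ∈ t, c v (x + μ • ((#t : ℝ) • a - ∑ v ∈ t, v)) = c v x - μ := by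
  obtain ⟨h₀, h₁, hx⟩ := hc.mem_convexHull_iff.1 hx
  set w : E → ℝ := fun y ↦ if y = a then c a x + #t * μ else c y x - μ
  have hwa : w a = c a x + #t * μ := if_pos rfl
  have hwt : ∀ v ∈ t, w v = c v x - μ := fun v hv ↦ if_neg (ne_of_mem_of_not_mem hv ha)
  rw [Finset.sum_insert ha] at h₁ hx
  have hw₀ : ∀ y ∈ insert a t, 0 ≤ w y := by
    simp only [Finset.forall_mem_insert, hwa]
    refine ⟨by positivity [h₀ a (Finset.mem_insert_self a t)], fun v hv ↦ ?_⟩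
    linarith [hwt v hv, hμ v hv]
  have hw₁ : ∑ y ∈ insert a t, w y = 1 := by
    rw [Finset.sum_insert ha, hwa, Finset.sum_congr rfl hwt, Finset.sum_sub_distrib,
      Finset.sum_const, nsmul_eq_mul]
    linarith
  have hwx : ∑ y ∈ insert a t, w y • y = x + μ • ((#t : ℝ) • a - ∑ v ∈ t, v) := by
    rw [Finset.sum_insert ha, hwa,
      Finset.sum_congr rfl fun v hv ↦ by rw [hwt v hv, sub_smul], Finset.sum_sub_distrib,
      ← Finset.smul_sum]
    conv_rhs => rw [← hx]
    module
  refine ⟨Finset.mem_convexHull'.2 ⟨w, hw₀, hw₁, hwx⟩, fun v hv ↦ ?_⟩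
  rw [← hwx, hc.apply_sum w hw₁ v (Finset.mem_insert_of_mem hv), hwt v hv]

end IsBarycentricCoords

def IsStrongDeformationRetract {α : Type*} [TopologicalSpace α] (X Y : Set α) : Prop :=
  ∃ H : C(Y × I, Y), (∀ y, H (y, 0) = y) ∧ (∀ y, (H (y, 1) : α) ∈ X) ∧
    ∀ y : Y, (y : α) ∈ X → ∀ t, H (y, t) = y

namespace IsStrongDeformationRetract

variable {α : Type*} [TopologicalSpace α]

theorem refl (X : Set α) : IsStrongDeformationRetract X X :=
  ⟨⟨Prod.fst, continuous_fst⟩, fun _ ↦ rfl, fun y ↦ y.2, fun _ _ _ ↦ rfl⟩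

theorem of_homotopyRel {X Y : Set α} {r : C(Y, Y)} (hr : ∀ y, (r y : α) ∈ X)
    (F : (ContinuousMap.id Y).HomotopyRel r {y | (y : α) ∈ X}) :
    IsStrongDeformationRetract X Y :=
  ⟨F.toContinuousMap.comp .prodSwap, F.apply_zero, fun y ↦ F.apply_one y ▸ hr y,
    fun _ hy t ↦ F.eq_fst t hy⟩

theorem trans {W X Y : Set α} (hWX : IsStrongDeformationRetract W X)
    (hXY : IsStrongDeformationRetract X Y) (hW : W ⊆ X) (hX : X ⊆ Y) :
    IsStrongDeformationRetract W Y := by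
  obtain ⟨F, hF₀, hF₁, hFW⟩ := hWX
  obtain ⟨G, hG₀, hG₁, hGX⟩ := hXY
  let ι : C(X, Y) := .inclusion hX
  let ρ : C(Y, X) := ⟨fun y ↦ ⟨G (y, 1), hG₁ y⟩, by fun_prop⟩
  have hρ : ∀ y : Y, (hy : (y : α) ∈ X) → ρ y = ⟨y, hy⟩ := fun y hy ↦
    Subtype.ext (congrArg ((↑) : Y → α) (hGX y hy 1))
  let r : C(X, X) := ⟨fun x ↦ F (x, 1), by fun_prop⟩
  let G' : (ContinuousMap.id Y).HomotopyRel (ι.comp ρ) {y | (y : α) ∈ W} :=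
    { toFun := fun p ↦ G (p.2, p.1)
      map_zero_left := hG₀
      map_one_left := fun _ ↦ rfl
      prop' := fun t y hy ↦ hGX y (hW hy) t }
  let F' : (ι.comp ρ).HomotopyRel (ι.comp (r.comp ρ)) {y | (y : α) ∈ W} :=
    { toFun := fun p ↦ ι (F (ρ p.2, p.1))
      map_zero_left := fun y ↦ by simp [hF₀]
      map_one_left := fun _ ↦ rfl
      prop' := fun t y hy ↦ by simp [hρ y (hW hy), hFW ⟨y, hW hy⟩ hy t] }
  exact of_homotopyRel (fun y ↦ hF₁ (ρ y)) (G'.trans F')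

theorem contractibleSpace {Y : Set α} {x : α} (h : IsStrongDeformationRetract {x} Y)
    (hx : x ∈ Y) : ContractibleSpace Y := by
  obtain ⟨H, hH₀, hH₁, -⟩ := h
  have : Nonempty Y := ⟨⟨x, hx⟩⟩
  rw [contractible_iff_id_nullhomotopic]
  exact ⟨⟨x, hx⟩, ⟨{ toContinuousMap := H.comp .prodSwap
                     map_zero_left := hH₀
                     map_one_left := fun y ↦ Subtype.ext (hH₁ y) }⟩⟩

end IsStrongDeformationRetract

namespace Geometry.SimplicialComplex

theorem space_mono {K L : SimplicialComplex ℝ E} (h : L ≤ K) : L.space ⊆ K.space :=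
  Set.iUnion₂_subset fun _ hs ↦ convexHull_subset_space (h hs)

theorem isClosed_space {K : SimplicialComplex ℝ E} (hK : K.faces.Finite) : IsClosed K.space :=
  hK.isClosed_biUnion fun s _ ↦ (s.finite_toSet.isCompact_convexHull ℝ).isClosed

end Geometry.SimplicialComplex

noncomputable def collapseDepth (s t : Finset E) (ht : t.Nonempty) (c : E → E → ℝ) : E → ℝ :=
  (convexHull ℝ (s : Set E)).indicator fun x ↦ t.inf' ht fun v ↦ c v x

section collapseDepth

variable {s t : Finset E} {ht : t.Nonempty} {c : E → E → ℝ} {x : E}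

theorem collapseDepth_of_mem (hx : x ∈ convexHull ℝ (s : Set E)) :
    collapseDepth s t ht c x = t.inf' ht fun v ↦ c v x :=
  Set.indicator_of_mem hx _

theorem collapseDepth_of_notMem (hx : x ∉ convexHull ℝ (s : Set E)) :
    collapseDepth s t ht c x = 0 :=
  Set.indicator_of_notMem hx _

theorem collapseDepth_le (hx : x ∈ convexHull ℝ (s : Set E)) {v : E} (hv : v ∈ t) :
    collapseDepth s t ht c x ≤ c v x :=
  (collapseDepth_of_mem hx).trans_le (Finset.inf'_le _ hv)

theorem IsBarycentricCoords.collapseDepth_nonneg (hc : IsBarycentricCoords s c) (hts : t ⊆ s) :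
    0 ≤ collapseDepth s t ht c x := by
  by_cases hx : x ∈ convexHull ℝ (s : Set E)
  · rw [collapseDepth_of_mem hx]
    exact Finset.le_inf' ht _ fun v hv ↦ (hc.mem_convexHull_iff.1 hx).1 v (hts hv)
  · rw [collapseDepth_of_notMem hx]

end collapseDepth

namespace IsFreeFace

variable {K L : SimplicialComplex ℝ E} {t s : Finset E} (h : IsFreeFace K t s)
include h

theorem nonempty : t.Nonempty := K.nonempty_of_mem_faces h.1

theorem exists_notMem_insert_eq [DecidableEq E] : ∃ a ∉ t, insert a t = s :=
  Finset.exists_eq_insert_iff.2 ⟨h.2.2.1.subset, h.2.2.2.1.symm⟩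

theorem subset_of_superset {f : Finset E} (hf : f ∈ K.faces) (htf : t ⊆ f) : f ⊆ s := by
  rcases htf.eq_or_ssubset with rfl | htf
  exacts [h.2.2.1.subset, (h.2.2.2.2 f hf htf).subset]

variable (hL : L.faces = K.faces \ {t, s})
include hL

theorem mem_faces_iff {f : Finset E} : f ∈ L.faces ↔ f ∈ K.faces ∧ ¬t ⊆ f := by
  rw [hL, Set.mem_sdiff, Set.mem_insert_iff, Set.mem_singleton_iff]
  refine and_congr_right fun hf ↦ ⟨fun hne htf ↦ ?_, fun htf ↦ ?_⟩
  · rcases htf.eq_or_ssubset with rfl | htf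
    exacts [hne (.inl rfl), hne (.inr (h.2.2.2.2 f hf htf))]
  · rintro (rfl | rfl)
    exacts [htf subset_rfl, htf h.2.2.1.subset]

theorem space_subset_union : K.space ⊆ convexHull ℝ (s : Set E) ∪ L.space := by
  intro x hx
  obtain ⟨f, hf, hxf⟩ := K.mem_space_iff.1 hx
  by_cases htf : t ⊆ f
  · exact .inl (convexHull_mono (Finset.coe_subset.2 (h.subset_of_superset hf htf)) hxf)
  · exact .inr (L.convexHull_subset_space ((h.mem_faces_iff hL).2 ⟨hf, htf⟩) hxf)

theorem erase_mem_faces [DecidableEq E] {v : E} (hv : v ∈ t) : s.erase v ∈ L.faces := by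
  obtain ⟨a, ha, rfl⟩ := h.exists_notMem_insert_eq
  have hav : a ≠ v := fun hav ↦ ha (hav ▸ hv)
  refine (h.mem_faces_iff hL).2 ⟨K.down_closed h.2.1 (Finset.erase_subset v _) ?_, ?_⟩
  · exact ⟨a, Finset.mem_erase.2 ⟨hav, Finset.mem_insert_self a t⟩⟩
  · exact fun hte ↦ Finset.notMem_erase v _ (hte hv)

theorem exists_apply_eq_zero {c : E → E → ℝ} (hc : IsBarycentricCoords s c) {x : E}
    (hxs : x ∈ convexHull ℝ (s : Set E)) (hxL : x ∈ L.space) : ∃ v ∈ t, c v x = 0 := by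
  classical
  obtain ⟨f, hf, hxf⟩ := L.mem_space_iff.1 hxL
  obtain ⟨hfK, htf⟩ := (h.mem_faces_iff hL).1 hf
  obtain ⟨v, hvt, hvf⟩ := Finset.not_subset.1 htf
  have hx : x ∈ convexHull ℝ ((f ∩ s : Finset E) : Set E) := by
    rw [Finset.coe_inter, ← K.convexHull_inter_convexHull hfK h.2.1]
    exact ⟨hxf, hxs⟩
  refine ⟨v, hvt, hc.apply_eq_zero_of_mem_convexHull Finset.inter_subset_right hx
    (h.2.2.1.subset hvt) fun hv ↦ hvf (Finset.mem_of_mem_inter_left hv)⟩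

theorem collapseDepth_eq_zero {c : E → E → ℝ} (hc : IsBarycentricCoords s c) {x : E}
    (hx : x ∈ L.space) : collapseDepth s t h.nonempty c x = 0 := by
  by_cases hxs : x ∈ convexHull ℝ (s : Set E)
  · obtain ⟨v, hvt, hv⟩ := h.exists_apply_eq_zero hL hc hxs hx
    exact le_antisymm (hv ▸ collapseDepth_le hxs hvt) (hc.collapseDepth_nonneg h.2.2.1.subset)
  · exact collapseDepth_of_notMem hxs

theorem continuousOn_collapseDepth {c : E → E → ℝ} (hc : IsBarycentricCoords s c)
    (hL_fin : L.faces.Finite) : ContinuousOn (collapseDepth s t h.nonempty c) K.space := by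
  have hs : ContinuousOn (collapseDepth s t h.nonempty c) (convexHull ℝ (s : Set E)) :=
    (Continuous.finset_inf'_apply h.nonempty fun v _ ↦ hc.continuous v).continuousOn.congr
      fun _ hx ↦ collapseDepth_of_mem hx
  have hL' : ContinuousOn (collapseDepth s t h.nonempty c) L.space :=
    continuousOn_const.congr fun _ hx ↦ h.collapseDepth_eq_zero hL hc hx
  exact (hs.union_of_isClosed hL' (s.finite_toSet.isCompact_convexHull ℝ).isClosed
    (L.isClosed_space hL_fin)).mono (h.space_subset_union hL)

end IsFreeFace

namespace IsFreeFace

variable [DecidableEq E] {K L : SimplicialComplex ℝ E} {t : Finset E} {a : E} {c : E → E → ℝ}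
  (h : IsFreeFace K t (insert a t)) (ha : a ∉ t) (hc : IsBarycentricCoords (insert a t) c)
include h ha hc

theorem add_smul_mem_space {x : E} (hx : x ∈ K.space) {u : ℝ} (hu₀ : 0 ≤ u) (hu₁ : u ≤ 1) :
    x + (u * collapseDepth (insert a t) t h.nonempty c x) • ((#t : ℝ) • a - ∑ v ∈ t, v) ∈
      K.space := by
  by_cases hxs : x ∈ convexHull ℝ ((insert a t : Finset E) : Set E)
  · have hm₀ : 0 ≤ collapseDepth (insert a t) t h.nonempty c x :=
      hc.collapseDepth_nonneg (Finset.subset_insert a t)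
    refine K.convexHull_subset_space h.2.1
      (hc.add_smul_mem_convexHull_and_apply_eq ha hxs (by positivity) fun v hv ↦ ?_).1
    exact (mul_le_of_le_one_left hm₀ hu₁).trans (collapseDepth_le hxs hv)
  · simpa [collapseDepth_of_notMem hxs] using hx

theorem add_collapseDepth_smul_mem_space (hL : L.faces = K.faces \ {t, insert a t}) {x : E}
    (hx : x ∈ K.space) :
    x + collapseDepth (insert a t) t h.nonempty c x • ((#t : ℝ) • a - ∑ v ∈ t, v) ∈
      L.space := by
  rcases h.space_subset_union hL hx with hxs | hxL
  · obtain ⟨v, hv, hvx⟩ := Finset.exists_mem_eq_inf' h.nonempty fun v ↦ c v x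
    have hm : collapseDepth (insert a t) t h.nonempty c x = c v x :=
      (collapseDepth_of_mem hxs).trans hvx
    obtain ⟨hy, hcy⟩ := hc.add_smul_mem_convexHull_and_apply_eq ha hxs
      (hc.collapseDepth_nonneg (Finset.subset_insert a t)) fun w hw ↦ collapseDepth_le hxs hw
    refine L.convexHull_subset_space (h.erase_mem_faces hL hv) (hc.mem_convexHull_erase hy ?_)
    rw [hcy v hv, hm, sub_self]
  · simpa [h.collapseDepth_eq_zero hL hc hxL] using hxL

theorem isStrongDeformationRetract (hL : L.faces = K.faces \ {t, insert a t})
    (hL_fin : L.faces.Finite) : IsStrongDeformationRetract L.space K.space := by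
  set m := collapseDepth (insert a t) t h.nonempty c
  set d : E := (#t : ℝ) • a - ∑ v ∈ t, v
  have hm : Continuous fun p : K.space × I ↦ m p.1 :=
    (h.continuousOn_collapseDepth hL hc hL_fin).comp_continuous (by fun_prop) fun p ↦ p.1.2
  have hH : Continuous fun p : K.space × I ↦ (p.1 : E) + (p.2 * m p.1) • d :=
    (continuous_subtype_val.comp continuous_fst).add
      (((continuous_subtype_val.comp continuous_snd).mul hm).smul continuous_const)
  refine ⟨⟨fun p ↦ ⟨p.1 + (p.2 * m p.1) • d, h.add_smul_mem_space ha hc p.1.2 p.2.2.1 p.2.2.2⟩,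
    hH.subtype_mk _⟩, fun y ↦ ?_, fun y ↦ ?_, fun y hy t ↦ ?_⟩
  · ext
    simp
  · simpa using h.add_collapseDepth_smul_mem_space ha hc hL y.2
  · ext
    simp [m, h.collapseDepth_eq_zero hL hc hy]

end IsFreeFace

theorem ElemCollapse.le {K L : SimplicialComplex ℝ E} (h : ElemCollapse K L) : L ≤ K := by
  obtain ⟨t, s, -, hL⟩ := h
  show L.faces ⊆ K.faces
  exact hL ▸ Set.sdiff_subset

theorem ElemCollapse.isStrongDeformationRetract {K L : SimplicialComplex ℝ E}
    (h : ElemCollapse K L) (hK : K.faces.Finite) : IsStrongDeformationRetract L.space K.space := by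
  classical
  have hL_fin : L.faces.Finite := hK.subset h.le
  obtain ⟨t, s, hts, hL⟩ := h
  obtain ⟨a, ha, rfl⟩ := hts.exists_notMem_insert_eq
  obtain ⟨c, hc⟩ := (K.indep hts.2.1).exists_isBarycentricCoords
  exact hts.isStrongDeformationRetract ha hc hL hL_fin

theorem CollapsesTo.le {K L : SimplicialComplex ℝ E} (h : CollapsesTo K L) : L ≤ K := by
  induction h with
  | refl => exact le_rfl
  | tail _ hL ih => exact hL.le.trans ih

theorem CollapsesTo.isStrongDeformationRetract {K L : SimplicialComplex ℝ E}
    (h : CollapsesTo K L) (hK : K.faces.Finite) : IsStrongDeformationRetract L.space K.space := by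
  induction h with
  | refl => exact .refl _
  | tail hKL hL ih =>
    exact (hL.isStrongDeformationRetract (hK.subset (CollapsesTo.le hKL))).trans ih
      (SimplicialComplex.space_mono hL.le) (SimplicialComplex.space_mono (CollapsesTo.le hKL))

theorem Collapsible.contractibleSpace {K : SimplicialComplex ℝ E} (h : Collapsible K)
    (hK : K.faces.Finite) : ContractibleSpace K.space := by
  obtain ⟨L, v, hLv, hKL⟩ := h
  have hL : L.space = {v} := by simp [SimplicialComplex.space, hLv]
  have hv : v ∈ K.space := SimplicialComplex.space_mono hKL.le (hL ▸ rfl)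
  exact (hL ▸ hKL.isStrongDeformationRetract hK).contractibleSpace hv

/-- If a finite simplicial complex `Y` collapses onto a subcomplex `X`, then the
underlying polyhedron `|X|` is a strong deformation retract of `|Y|`; in
particular, the underlying space of every collapsible finite simplicial complex
is contractible. -/
theorem collapsesTo_strongDeformationRetract :
    (∀ (Y X : SimplicialComplex ℝ E), Y.faces.Finite → CollapsesTo Y X →
      ∃ H : C(Y.space × I, Y.space),
        (∀ y : Y.space, H (y, 0) = y) ∧
        (∀ y : Y.space, ((H (y, 1) : E) ∈ X.space)) ∧
        (∀ y : Y.space, (y : E) ∈ X.space → ∀ t : I, H (y, t) = y)) ∧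
    (∀ K : SimplicialComplex ℝ E, K.faces.Finite → Collapsible K →
      ContractibleSpace K.space) :=
  ⟨fun _ _ hY hYX ↦ hYX.isStrongDeformationRetract hY, fun _ hK hKc ↦ hKc.contractibleSpace hK⟩
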